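/- Suppose S and T are numerical semigroups, w ≥ 1 an integer, and f ∈ ℤ[x] a polynomial with H_S(x^w)·f(x) = H_T(x) as formal power series. Then: (a) f(0) = 1; (b) f(1) = w; (c) 2·f′(1) = w·(2·g(T) − 2w·g(S) + w − 1), where g denotes the genus; and (d) F(T) = w·F(S) + deg f. -/

import Mathlib

open Polynomial
open scoped Classical

/-- A numerical semigroup: a subset of `ℕ` containing `0`, closed under addition,
with finite complement in `ℕ`. -/
structure NumericalSemigroup where
  carrier : Set ℕ
  zero_mem : 0 ∈ carrier
  add_mem : ∀ ⦃a b : ℕ⦄, a ∈ carrier → b ∈ carrier → a + b ∈ carrier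
  finite_compl : Set.Finite carrierᶜ

namespace NumericalSemigroup

/-- The Hilbert series `H_S(x) = Σ_{s ∈ S} x^s`. -/
noncomputable def H (S : NumericalSemigroup) : PowerSeries ℤ :=
  PowerSeries.mk fun n => if n ∈ S.carrier then 1 else 0

/-- The Hilbert series evaluated at `x^w`: `H_S(x^w) = Σ_{s ∈ S} x^{w·s}`. -/
noncomputable def Hexp (S : NumericalSemigroup) (w : ℕ) : PowerSeries ℤ :=
  PowerSeries.mk fun n => if ∃ s ∈ S.carrier, n = w * s then 1 else 0

/-- The semigroup polynomial `P_S(x) = (1-x)·H_S(x) = 1 + (x-1)·Σ_{s ∉ S} x^s`. -/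
noncomputable def P (S : NumericalSemigroup) : Polynomial ℤ :=
  1 + (X - 1) * ∑ s ∈ S.finite_compl.toFinset, X ^ s

/-- The Frobenius number: the largest integer not in `S` (equal to `-1` when `S = ℕ`). -/
noncomputable def Frob (S : NumericalSemigroup) : ℤ :=
  (insert (-1 : ℤ) (S.finite_compl.toFinset.image fun n : ℕ => (n : ℤ))).max'
    (Finset.insert_nonempty _ _)

/-- The genus: the number of gaps of `S`. -/
noncomputable def genus (S : NumericalSemigroup) : ℕ := S.finite_compl.toFinset.card

/-- `S` viewed as a set of integers. -/
def intSet (S : NumericalSemigroup) : Set ℤ := (fun n : ℕ => (n : ℤ)) '' S.carrier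

/-- `S` is cyclotomic if every complex root of `P_S` lies in the closed unit disc. -/
def IsCyclotomicNS (S : NumericalSemigroup) : Prop :=
  ∀ z : ℂ, Polynomial.aeval z S.P = 0 → ‖z‖ ≤ 1

/-- `S` is symmetric if for every integer `z`, `z ∈ S ↔ F(S) - z ∉ S`. -/
def IsSymmetric (S : NumericalSemigroup) : Prop :=
  ∀ z : ℤ, z ∈ S.intSet ↔ S.Frob - z ∉ S.intSet

/-- The Apéry set of `S` with respect to `m`: elements `s ∈ S` with `s - m ∉ S`
(in particular all `s ∈ S` with `s < m`). -/
def Ap (S : NumericalSemigroup) (m : ℕ) : Set ℕ :=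
  {s ∈ S.carrier | ∀ t ∈ S.carrier, t + m ≠ s}

end NumericalSemigroup


/-!
Multiplying the hypothesis by `1 - x^w = (1 + x + ⋯ + x^(w-1)) (1 - x)` turns it into the
polynomial identity `P_S(x^w) f(x) = (1 + x + ⋯ + x^(w-1)) P_T(x)`, where `P_S = (1 - x) H_S`
is the semigroup polynomial. Since `P_S(0) = P_S(1) = 1`, `P_S'(1) = g(S)` and
`deg P_S = F(S) + 1`, evaluating this identity at `0` and `1`, differentiating it at `1` and
comparing degrees gives the four claims.
-/

theorem PowerSeries.expand_coe {R : Type*} [CommRing R] (p : R[X]) {w : ℕ} (hw : w ≠ 0) :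
    PowerSeries.expand w hw (p : PowerSeries R) = (Polynomial.expand R w p : R[X]) := by
  ext n
  rw [Polynomial.coeff_coe, Polynomial.coeff_expand (Nat.pos_of_ne_zero hw), coeff_expand]
  split_ifs <;> simp [Polynomial.coeff_coe]

namespace Polynomial

theorem coeff_geom_sum_X {R : Type*} [Semiring R] (w n : ℕ) :
    (∑ i ∈ Finset.range w, X ^ i : R[X]).coeff n = if n < w then 1 else 0 := by
  simp only [finsetSum_coeff, coeff_X_pow, Finset.sum_ite_eq, Finset.mem_range]

theorem natDegree_geom_sum_X {R : Type*} [Semiring R] [Nontrivial R] {w : ℕ} (hw : w ≠ 0) :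
    (∑ i ∈ Finset.range w, X ^ i : R[X]).natDegree = w - 1 := by
  refine natDegree_eq_of_le_of_coeff_ne_zero ?_ (by simp [hw, Nat.pos_of_ne_zero])
  refine natDegree_le_iff_coeff_eq_zero.2 fun n hn => ?_
  rw [coeff_geom_sum_X, if_neg]
  omega

theorem two_mul_eval_one_derivative_geom_sum_X {R : Type*} [CommRing R] (w : ℕ) :
    2 * (derivative (∑ i ∈ Finset.range w, X ^ i : R[X])).eval 1 = w * (w - 1) := by
  simp only [derivative_sum, derivative_X_pow, eval_finsetSum, eval_mul, eval_C, eval_pow,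
    eval_X, one_pow, mul_one]
  rcases Nat.eq_zero_or_pos w with rfl | hw
  · simp
  · have := congrArg (Nat.cast : ℕ → R) (Finset.sum_range_id_mul_two w)
    push_cast [Nat.cast_sub hw] at this
    rw [mul_comm, this]

section ExpandMulEqGeomSumMul

variable {R : Type*} [CommRing R] {p q f : R[X]} {w : ℕ}

theorem eval_zero_of_expand_mul_eq (h : expand R w p * f = (∑ i ∈ Finset.range w, X ^ i) * q)
    (hw : w ≠ 0) (hp : p.eval 0 = 1) (hq : q.eval 0 = 1) : f.eval 0 = 1 := by
  have h0 := congrArg (eval 0) h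
  have hgeom : (∑ i ∈ Finset.range w, X ^ i : R[X]).eval 0 = 1 := by
    rw [← coeff_zero_eq_eval_zero, coeff_geom_sum_X, if_pos (Nat.pos_of_ne_zero hw)]
  rwa [eval_mul, eval_mul, expand_eval, zero_pow hw, hp, hq, hgeom, one_mul, mul_one] at h0

theorem eval_one_of_expand_mul_eq (h : expand R w p * f = (∑ i ∈ Finset.range w, X ^ i) * q)
    (hp : p.eval 1 = 1) (hq : q.eval 1 = 1) : f.eval 1 = w := by
  simpa [hp, hq] using congrArg (eval 1) h

theorem two_mul_derivative_eval_one_of_expand_mul_eq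
    (h : expand R w p * f = (∑ i ∈ Finset.range w, X ^ i) * q)
    (hp : p.eval 1 = 1) (hq : q.eval 1 = 1) :
    2 * f.derivative.eval 1
      = w * (2 * q.derivative.eval 1 - 2 * w * p.derivative.eval 1 + w - 1) := by
  have hd := congrArg (fun r => (derivative r).eval 1) h
  simp only [derivative_mul, derivative_expand, eval_add, eval_mul, expand_eval, one_pow, hp, hq,
    eval_one_of_expand_mul_eq h hp hq, eval_natCast, eval_finsetSum, eval_pow, eval_X,
    Finset.sum_const, Finset.card_range, nsmul_eq_mul, mul_one, one_mul] at hd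
  linear_combination 2 * hd + two_mul_eval_one_derivative_geom_sum_X (R := R) w

theorem natDegree_add_of_expand_mul_eq [IsDomain R]
    (h : expand R w p * f = (∑ i ∈ Finset.range w, X ^ i) * q)
    (hw : w ≠ 0) (hp : p ≠ 0) (hf : f ≠ 0) :
    w * p.natDegree + f.natDegree = w - 1 + q.natDegree := by
  have hlhs : expand R w p * f ≠ 0 :=
    mul_ne_zero ((expand_ne_zero (Nat.pos_of_ne_zero hw)).2 hp) hf
  rw [h] at hlhs
  have hd := congrArg natDegree h
  rwa [natDegree_mul ((expand_ne_zero (Nat.pos_of_ne_zero hw)).2 hp) hf, natDegree_expand,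
    natDegree_mul (left_ne_zero_of_mul hlhs) (right_ne_zero_of_mul hlhs),
    natDegree_geom_sum_X hw, mul_comm] at hd

end ExpandMulEqGeomSumMul

end Polynomial

namespace NumericalSemigroup

variable (S : NumericalSemigroup)

theorem coeff_sum_gaps (n : ℕ) :
    (∑ s ∈ S.finite_compl.toFinset, X ^ s : ℤ[X]).coeff n =
      if n ∈ S.carrier then 0 else 1 := by
  simp only [finsetSum_coeff, coeff_X_pow, Finset.sum_ite_eq, Set.Finite.mem_toFinset,
    Set.mem_compl_iff, ite_not]

theorem H_add_sum_gaps :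
    S.H + ((∑ s ∈ S.finite_compl.toFinset, X ^ s : ℤ[X]) : PowerSeries ℤ) =
      PowerSeries.mk 1 := by
  ext n
  rw [map_add, coeff_coe, coeff_sum_gaps, H, PowerSeries.coeff_mk, PowerSeries.coeff_mk]
  split_ifs <;> rfl

theorem coe_P : (S.P : PowerSeries ℤ) = (1 - PowerSeries.X) * S.H := by
  rw [eq_sub_of_add_eq S.H_add_sum_gaps, mul_sub, mul_comm, PowerSeries.mk_one_mul_one_sub_eq_one,
    P, coe_add, coe_mul, coe_sub, coe_X, coe_one]
  ring

theorem coeff_P_zero : S.P.coeff 0 = 1 := by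
  rw [← coeff_coe, coe_P, sub_mul, one_mul, map_sub, PowerSeries.coeff_zero_X_mul, H,
    PowerSeries.coeff_mk, if_pos S.zero_mem, sub_zero]

theorem coeff_P_succ (n : ℕ) :
    S.P.coeff (n + 1) =
      (if n + 1 ∈ S.carrier then 1 else 0) - (if n ∈ S.carrier then 1 else 0) := by
  rw [← coeff_coe, coe_P, sub_mul, one_mul, map_sub, PowerSeries.coeff_succ_X_mul, H,
    PowerSeries.coeff_mk, PowerSeries.coeff_mk]

theorem eval_zero_P : S.P.eval 0 = 1 := by
  rw [← coeff_zero_eq_eval_zero, coeff_P_zero]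

theorem eval_one_P : S.P.eval 1 = 1 := by
  simp [P]

theorem P_ne_zero : S.P ≠ 0 := fun h0 => by
  simpa [h0] using S.eval_one_P

theorem derivative_P_eval_one : S.P.derivative.eval 1 = S.genus := by
  simp [P, genus, eval_finsetSum]

theorem Hexp_eq_expand_H {w : ℕ} (hw : w ≠ 0) : S.Hexp w = PowerSeries.expand w hw S.H := by
  ext n
  rw [PowerSeries.coeff_expand, Hexp, H, PowerSeries.coeff_mk]
  split_ifs with hmem hdvd hdvd
  · rw [PowerSeries.coeff_mk, if_pos]
    obtain ⟨s, hs, rfl⟩ := hmem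
    rwa [Nat.mul_div_cancel_left _ (Nat.pos_of_ne_zero hw)]
  · exact absurd (hmem.elim fun s hs => ⟨s, hs.2⟩) hdvd
  · rw [PowerSeries.coeff_mk, if_neg]
    exact fun hs => hmem ⟨n / w, hs, (Nat.mul_div_cancel' hdvd).symm⟩
  · rfl

theorem mem_of_Frob_lt {n : ℕ} (h : S.Frob < n) : n ∈ S.carrier := by
  by_contra hn
  refine h.not_ge (Finset.le_max' _ _ (Finset.mem_insert_of_mem (Finset.mem_image_of_mem _ ?_)))
  simpa using hn

theorem Frob_eq_neg_one_or_exists_notMem : S.Frob = -1 ∨ ∃ n ∉ S.carrier, S.Frob = n := by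
  simpa [Frob, eq_comm] using Finset.max'_mem _ (Finset.insert_nonempty (-1 : ℤ)
    (S.finite_compl.toFinset.image fun n : ℕ => (n : ℤ)))

theorem natDegree_P : (S.P.natDegree : ℤ) = S.Frob + 1 := by
  obtain ⟨N, hN⟩ : ∃ N : ℕ, (N : ℤ) = S.Frob + 1 := by
    refine ⟨_, Int.toNat_of_nonneg ?_⟩
    rcases S.Frob_eq_neg_one_or_exists_notMem with hF | ⟨n, -, hF⟩ <;> omega
  rw [← hN, Nat.cast_inj]
  refine natDegree_eq_of_le_of_coeff_ne_zero (natDegree_le_iff_coeff_eq_zero.2 fun m hm => ?_) ?_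
  · obtain ⟨k, rfl⟩ : ∃ k, m = k + 1 := Nat.exists_eq_succ_of_ne_zero (by omega)
    have hk : S.Frob < k := by omega
    rw [coeff_P_succ, if_pos (S.mem_of_Frob_lt hk), if_pos (S.mem_of_Frob_lt (by omega)), sub_self]
  · rcases S.Frob_eq_neg_one_or_exists_notMem with hF | ⟨n, hn, hF⟩
    · rw [show N = 0 by omega, coeff_P_zero]
      exact one_ne_zero
    · rw [show N = n + 1 by omega, coeff_P_succ, if_pos (S.mem_of_Frob_lt (by omega)), if_neg hn]
      exact one_ne_zero

theorem expand_P_mul_eq_geom_sum_mul_P {S T : NumericalSemigroup} {w : ℕ} (hw : w ≠ 0)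
    {f : ℤ[X]} (h : S.Hexp w * (f : PowerSeries ℤ) = T.H) :
    expand ℤ w S.P * f = (∑ i ∈ Finset.range w, X ^ i) * T.P := by
  refine coe_inj.mp ?_
  calc ((expand ℤ w S.P * f : ℤ[X]) : PowerSeries ℤ)
      = (1 - PowerSeries.X ^ w) * (S.Hexp w * (f : PowerSeries ℤ)) := by
        rw [coe_mul, ← PowerSeries.expand_coe _ hw, coe_P, map_mul, map_sub, map_one,
          PowerSeries.expand_X, S.Hexp_eq_expand_H hw, mul_assoc]
    _ = (∑ i ∈ Finset.range w, PowerSeries.X ^ i) * ((1 - PowerSeries.X) * T.H) := by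
        rw [h, ← geom_sum_mul_neg, mul_assoc]
    _ = (((∑ i ∈ Finset.range w, X ^ i) * T.P : ℤ[X]) : PowerSeries ℤ) := by
        rw [← coe_P, coe_mul, ← coeToPowerSeries.ringHom_apply (φ := ∑ i ∈ _, _), map_sum]
        simp only [map_pow, coeToPowerSeries.ringHom_apply, coe_X]

end NumericalSemigroup

open NumericalSemigroup in
/-- If `H_S(x^w)·f(x) = H_T(x)` with `f ∈ ℤ[x]` and `w ≥ 1`, then:
(a) `f(0) = 1`; (b) `f(1) = w`; (c) `2·f'(1) = w·(2·g(T) − 2w·g(S) + w − 1)`;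
(d) `F(T) = w·F(S) + deg f`. -/
theorem polynomially_related_basic (S T : NumericalSemigroup) (w : ℕ) (hw : 1 ≤ w)
    (f : Polynomial ℤ) (h : S.Hexp w * (f : PowerSeries ℤ) = T.H) :
    f.eval 0 = 1 ∧
    f.eval 1 = (w : ℤ) ∧
    2 * f.derivative.eval 1
      = (w : ℤ) * (2 * (T.genus : ℤ) - 2 * (w : ℤ) * (S.genus : ℤ) + (w : ℤ) - 1) ∧
    T.Frob = (w : ℤ) * S.Frob + (f.natDegree : ℤ) := by
  have hw0 : w ≠ 0 := Nat.one_le_iff_ne_zero.mp hw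
  have key := expand_P_mul_eq_geom_sum_mul_P hw0 h
  have hf0 := eval_zero_of_expand_mul_eq key hw0 S.eval_zero_P T.eval_zero_P
  refine ⟨hf0, eval_one_of_expand_mul_eq key S.eval_one_P T.eval_one_P, ?_, ?_⟩
  · simpa only [derivative_P_eval_one] using
      two_mul_derivative_eval_one_of_expand_mul_eq key S.eval_one_P T.eval_one_P
  · have hdeg := natDegree_add_of_expand_mul_eq key hw0 S.P_ne_zero (by rintro rfl; simp at hf0)
    have := congrArg (Nat.cast : ℕ → ℤ) hdeg
    push_cast [Nat.cast_sub hw, natDegree_P] at this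
    linear_combination -this
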